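/- arXiv:1301.6321 — 2 statements merged into one kernel-verified Lean document; each statement's English description precedes it below -/
import Mathlib

section
/- For every T > 0 and every y₀ ∈ H, under hypothesis (EC) the minimal norm problem (NOCP)_T has an optimal control: there exists v* ∈ V_T with ‖v*‖_{L∞((0,T);H)} = M_T. -/
open MeasureTheory Set Filter Topology

noncomputable section

variable {H : Type*} [NormedAddCommGroup H] [InnerProductSpace ℂ H] [CompleteSpace H]
  [SecondCountableTopology H]

/-- `U` is a strongly continuous one-parameter group of unitary operators on `H`,
abstracting the Schrödinger group `e^{-iΔt}`. -/
def IsUnitaryGroup (U : ℝ → H →L[ℂ] H) : Prop :=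
  U 0 = ContinuousLinearMap.id ℂ H ∧
  (∀ s t : ℝ, U (s + t) = (U s).comp (U t)) ∧
  (∀ (t : ℝ) (x : H), ‖U t x‖ = ‖x‖) ∧
  ∀ x : H, Continuous fun t : ℝ => U t x

/-- `B` is a nonzero orthogonal projection on `H`, abstracting multiplication by `χ_ω`. -/
def IsOrthProj (B : H →L[ℂ] H) : Prop :=
  B ≠ 0 ∧ B.comp B = B ∧ ∀ x y : H, (inner ℂ (B x) y : ℂ) = inner ℂ x (B y)

/-- Membership in `L∞((a,b);H)`. -/
def MemLinfty (u : ℝ → H) (a b : ℝ) : Prop :=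
  AEStronglyMeasurable u (volume : Measure ℝ) ∧
    ∃ c : ℝ, ∀ᵐ t : ℝ ∂volume, t ∈ Ioo a b → ‖u t‖ ≤ c

/-- Membership in `L∞((0,∞);H)`. -/
def MemLinftyInf (u : ℝ → H) : Prop :=
  AEStronglyMeasurable u (volume : Measure ℝ) ∧
    ∃ c : ℝ, ∀ᵐ t : ℝ ∂volume, t ∈ Ioi (0 : ℝ) → ‖u t‖ ≤ c

/-- The `L∞((a,b);H)` norm of `u`. -/
def supNorm (u : ℝ → H) (a b : ℝ) : ℝ :=
  sInf {c : ℝ | 0 ≤ c ∧ ∀ᵐ t : ℝ ∂volume, t ∈ Ioo a b → ‖u t‖ ≤ c}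

/-- `stateT U B T τ u y₀ = y(T; χ_{(τ,T)}u, y₀)`, the mild solution at time `T` of the
controlled Schrödinger equation with initial state `y₀`, the control acting on `(τ,T)`:
`y(T) = U(T)y₀ + ∫_τ^T U(T-s) B u(s) ds`.  The free state at time `t` starting from `y₀`
with control `u` active from time `0` is `stateT U B t 0 u y₀`. -/
def stateT (U : ℝ → H →L[ℂ] H) (B : H →L[ℂ] H) (T τ : ℝ) (u : ℝ → H) (y₀ : H) : H :=
  U T y₀ + ∫ s in Ioo τ T, U (T - s) (B (u s))

/-- Hypothesis (EC): `L∞`-exact controllability with cost. -/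
def EC (U : ℝ → H →L[ℂ] H) (B : H →L[ℂ] H) : Prop :=
  ∀ τ : ℝ, 0 < τ → ∃ C : ℝ, 0 < C ∧ ∀ y₀ z : H, ∃ u : ℝ → H,
    AEStronglyMeasurable u (volume : Measure ℝ) ∧
    (∀ᵐ t : ℝ ∂volume, t ∈ Ioo 0 τ → ‖u t‖ ≤ C * ‖z - U τ y₀‖) ∧
    stateT U B τ 0 u y₀ = z

/-- Hypothesis (UC): unique continuation. -/
def UC (U : ℝ → H →L[ℂ] H) (B : H →L[ℂ] H) : Prop :=
  ∀ η : H, η ≠ 0 → volume {t : ℝ | B (U t η) = 0} = 0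

/-- The admissible set `U_M` of the minimal time problem `(TOCP)_M`. -/
def UMset (U : ℝ → H →L[ℂ] H) (B : H →L[ℂ] H) (y₀ : H) (M : ℝ) : Set (ℝ → H) :=
  {u | MemLinftyInf u ∧ (∀ᵐ t : ℝ ∂volume, t ∈ Ioi (0 : ℝ) → ‖u t‖ ≤ M) ∧
    ∃ s : ℝ, 0 < s ∧ stateT U B s 0 u y₀ = 0}

/-- The minimal time `T_M` of `(TOCP)_M`. -/
def Tmin (U : ℝ → H →L[ℂ] H) (B : H →L[ℂ] H) (y₀ : H) (M : ℝ) : ℝ :=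
  sInf {s : ℝ | 0 < s ∧ ∃ u ∈ UMset U B y₀ M, stateT U B s 0 u y₀ = 0}

/-- The admissible set `V_T` of the minimal norm problem `(NOCP)_T`. -/
def VTset (U : ℝ → H →L[ℂ] H) (B : H →L[ℂ] H) (y₀ : H) (T : ℝ) : Set (ℝ → H) :=
  {v | MemLinfty v 0 T ∧ stateT U B T 0 v y₀ = 0}

/-- The minimal norm `M_T` of `(NOCP)_T`. -/
def Mmin (U : ℝ → H →L[ℂ] H) (B : H →L[ℂ] H) (y₀ : H) (T : ℝ) : ℝ :=
  sInf ((fun v : ℝ → H => supNorm v 0 T) '' VTset U B y₀ T)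

/-- Hypothesis (BB): bang-bang property of the minimal time problems. -/
def BB (U : ℝ → H →L[ℂ] H) (B : H →L[ℂ] H) : Prop :=
  ∀ y₀ : H, y₀ ≠ 0 → ∀ M : ℝ, 0 < M → ∀ u ∈ UMset U B y₀ M,
    stateT U B (Tmin U B y₀ M) 0 u y₀ = 0 →
    ∀ᵐ t : ℝ ∂volume, t ∈ Ioo 0 (Tmin U B y₀ M) → ‖u t‖ = M

/-- Hypothesis (ET): existence of optimal controls for the minimal time problems. -/
def ET (U : ℝ → H →L[ℂ] H) (B : H →L[ℂ] H) : Prop :=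
  ∀ y₀ : H, y₀ ≠ 0 → ∀ M : ℝ, 0 < M →
    ∃ u ∈ UMset U B y₀ M, stateT U B (Tmin U B y₀ M) 0 u y₀ = 0

/-- The admissible set `U_{M,τ}`. -/
def UadmSet (M τ T : ℝ) : Set (ℝ → H) :=
  {u | MemLinfty u 0 T ∧ ∀ᵐ t : ℝ ∂volume, t ∈ Ioo τ T → ‖u t‖ ≤ M}

/-- The optimal distance `r(M,τ)` of the optimal target problem `(OP)^{M,τ}`. -/
def rOP (U : ℝ → H →L[ℂ] H) (B : H →L[ℂ] H) (y₀ z_d : H) (T M τ : ℝ) : ℝ :=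
  sInf ((fun u : ℝ → H => ‖stateT U B T τ u y₀ - z_d‖) '' UadmSet M τ T)

/-- `u` is an optimal control to `(OP)^{M,τ}`. -/
def IsOptOP (U : ℝ → H →L[ℂ] H) (B : H →L[ℂ] H) (y₀ z_d : H) (T M τ : ℝ) (u : ℝ → H) :
    Prop :=
  u ∈ UadmSet M τ T ∧ ‖stateT U B T τ u y₀ - z_d‖ = rOP U B y₀ z_d T M τ

/-- `M^τ`, the minimal norm for exact steering to the target `z_d`. -/
def Mtau (U : ℝ → H →L[ℂ] H) (B : H →L[ℂ] H) (y₀ z_d : H) (T τ : ℝ) : ℝ :=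
  sInf ((fun u : ℝ → H => supNorm u τ T) ''
    {u : ℝ → H | MemLinfty u 0 T ∧ stateT U B T τ u y₀ = z_d})

/-- The admissible set `W_{τ,r}` of the optimal norm problem `(NP)^{τ,r}`. -/
def WadmSet (U : ℝ → H →L[ℂ] H) (B : H →L[ℂ] H) (y₀ z_d : H) (T τ r : ℝ) :
    Set (ℝ → H) :=
  {u | MemLinfty u 0 T ∧ ‖stateT U B T τ u y₀ - z_d‖ ≤ r}

/-- The optimal norm `M(τ,r)` of `(NP)^{τ,r}`. -/
def MNP (U : ℝ → H →L[ℂ] H) (B : H →L[ℂ] H) (y₀ z_d : H) (T τ r : ℝ) : ℝ :=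
  sInf ((fun u : ℝ → H => supNorm u τ T) '' WadmSet U B y₀ z_d T τ r)

/-- `u` is an optimal control to `(NP)^{τ,r}`. -/
def IsOptNP (U : ℝ → H →L[ℂ] H) (B : H →L[ℂ] H) (y₀ z_d : H) (T τ r : ℝ) (u : ℝ → H) :
    Prop :=
  u ∈ WadmSet U B y₀ z_d T τ r ∧ supNorm u τ T = MNP U B y₀ z_d T τ r

/-- The admissible set `V_{M,r}` of the second type optimal time problem `(TP)^{M,r}`. -/
def VadmSet (U : ℝ → H →L[ℂ] H) (B : H →L[ℂ] H) (y₀ z_d : H) (T M r : ℝ) :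
    Set (ℝ → H) :=
  {u | ∃ τ : ℝ, τ ∈ Ico (0 : ℝ) T ∧ u ∈ UadmSet M τ T ∧
    ‖stateT U B T τ u y₀ - z_d‖ ≤ r}

/-- `τ_{M,r}(u)`. -/
def tauOf (U : ℝ → H →L[ℂ] H) (B : H →L[ℂ] H) (y₀ z_d : H) (T r : ℝ) (u : ℝ → H) : ℝ :=
  sSup {τ : ℝ | τ ∈ Ico (0 : ℝ) T ∧ ‖stateT U B T τ u y₀ - z_d‖ ≤ r}

/-- The optimal time `τ(M,r)` of `(TP)^{M,r}`. -/
def tauTP (U : ℝ → H →L[ℂ] H) (B : H →L[ℂ] H) (y₀ z_d : H) (T M r : ℝ) : ℝ :=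
  sSup (tauOf U B y₀ z_d T r '' VadmSet U B y₀ z_d T M r)

/-- `u` is an optimal control to `(TP)^{M,r}`. -/
def IsOptTP (U : ℝ → H →L[ℂ] H) (B : H →L[ℂ] H) (y₀ z_d : H) (T M r : ℝ) (u : ℝ → H) :
    Prop :=
  u ∈ VadmSet U B y₀ z_d T M r ∧
    ‖stateT U B T (tauTP U B y₀ z_d T M r) u y₀ - z_d‖ ≤ r

/-- The adjoint state `φ*(t) = U(t-T)(z_d - y(T; χ_{(τ,T)}u, y₀))`. -/
def adjState (U : ℝ → H →L[ℂ] H) (B : H →L[ℂ] H) (y₀ z_d : H) (T τ : ℝ) (u : ℝ → H)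
    (t : ℝ) : H :=
  U (t - T) (z_d - stateT U B T τ u y₀)

/-!
Regard the admissible controls as elements of the Hilbert space `L²((0,T);H)`. For `c > M_T`
the controls bounded by `c` a.e. that steer `y₀` to `0` at time `T` form a nonempty set (by the
definition of `M_T`; (EC) makes `V_T` nonempty), which is bounded, convex and closed: the
Duhamel map is continuous and linear on `L²`, and an a.e. bound survives `L²`-limits because
these have a.e.-convergent subsequences. The sets decrease as `c ↓ M_T`, and a decreasing
sequence of nonempty bounded closed convex sets in a Hilbert space has a common point; that
point is a control with `L∞`-norm at most `M_T`.
-/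

open scoped ENNReal

section HilbertSpace

variable {F : Type*} [NormedAddCommGroup F] [InnerProductSpace ℝ F]

theorem Convex.exists_mem_forall_norm_sub_sq_le {K : Set F} (hK : Convex ℝ K)
    (hne : K.Nonempty) (hc : IsComplete K) :
    ∃ p ∈ K, ∀ w ∈ K, ‖w - p‖ ^ 2 ≤ ‖w‖ ^ 2 - ‖p‖ ^ 2 := by
  obtain ⟨p, hpK, hp⟩ := exists_norm_eq_iInf_of_complete_convex hne hc hK 0
  refine ⟨p, hpK, fun w hw => ?_⟩
  have hinner : inner ℝ (0 - p) (w - p) ≤ 0 :=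
    (norm_eq_iInf_iff_real_inner_le_zero hK hpK).1 hp w hw
  have hw : ‖w‖ ^ 2 = ‖w - p‖ ^ 2 + 2 * inner ℝ (w - p) p + ‖p‖ ^ 2 := by
    rw [← norm_add_sq_real, sub_add_cancel]
  rw [zero_sub, inner_neg_left, real_inner_comm] at hinner
  linarith

/-- The minimal-norm points `p n` of the sets form a Cauchy sequence, since
`‖p m - p n‖ ^ 2 ≤ ‖p m‖ ^ 2 - ‖p n‖ ^ 2` for `n ≤ m` and `‖p n‖` increases to a finite limit. -/
theorem nonempty_iInter_of_antitone_of_convex [CompleteSpace F] {S : ℕ → Set F}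
    (hS : Antitone S) (hne : ∀ n, (S n).Nonempty) (hclosed : ∀ n, IsClosed (S n))
    (hconv : ∀ n, Convex ℝ (S n)) (hbdd : Bornology.IsBounded (S 0)) :
    (⋂ n, S n).Nonempty := by
  choose p hpS hp using fun n =>
    (hconv n).exists_mem_forall_norm_sub_sq_le (hne n) (hclosed n).isComplete
  have hdist : ∀ {n m}, n ≤ m → ‖p m - p n‖ ^ 2 ≤ ‖p m‖ ^ 2 - ‖p n‖ ^ 2 :=
    fun h => hp _ _ (hS h (hpS _))
  have hmono : Monotone fun n => ‖p n‖ ^ 2 := fun n m h => by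
    linarith [hdist h, sq_nonneg ‖p m - p n‖]
  obtain ⟨R, hR⟩ := hbdd.exists_norm_le
  have hbddAbove : BddAbove (range fun n => ‖p n‖ ^ 2) := by
    refine ⟨R ^ 2, forall_mem_range.2 fun n => ?_⟩
    exact pow_le_pow_left₀ (norm_nonneg _) (hR _ (hS (Nat.zero_le n) (hpS n))) 2
  have hcauchy : CauchySeq p := by
    have hsq := (tendsto_atTop_ciSup hmono hbddAbove).cauchySeq
    rw [Metric.cauchySeq_iff'] at hsq ⊢
    intro ε hε
    obtain ⟨N, hN⟩ := hsq (ε ^ 2) (by positivity)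
    refine ⟨N, fun n hn => lt_of_pow_lt_pow_left₀ 2 hε.le ?_⟩
    have := hN n hn
    rw [Real.dist_eq] at this
    rw [dist_eq_norm]
    linarith [hdist hn, le_abs_self (‖p n‖ ^ 2 - ‖p N‖ ^ 2)]
  obtain ⟨x, hx⟩ := cauchySeq_tendsto_of_complete hcauchy
  exact ⟨x, mem_iInter.2 fun N => (hclosed N).mem_of_tendsto hx
    (eventually_atTop.2 ⟨N, fun n hn => hS hn (hpS n)⟩)⟩

end HilbertSpace

section LpSpace

variable {α E : Type*} [MeasurableSpace α] {μ : Measure α} [NormedAddCommGroup E] {p : ℝ≥0∞}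

theorem MeasureTheory.isClosed_setOf_ae_mem_Lp [Fact (1 ≤ p)] {C : Set E} (hC : IsClosed C) :
    IsClosed {f : Lp E p μ | ∀ᵐ x ∂μ, f x ∈ C} := by
  refine IsSeqClosed.isClosed fun f g hf hfg => ?_
  obtain ⟨ns, -, hns⟩ := (tendstoInMeasure_of_tendsto_Lp hfg).exists_seq_tendsto_ae
  filter_upwards [ae_all_iff.2 fun i => hf (ns i), hns] with x hx hlim
  exact hC.mem_of_tendsto hlim (Eventually.of_forall hx)

theorem MeasureTheory.convex_setOf_ae_mem_Lp [NormedSpace ℝ E] {C : Set E} (hC : Convex ℝ C) :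
    Convex ℝ {f : Lp E p μ | ∀ᵐ x ∂μ, f x ∈ C} := by
  intro f hf g hg a b ha hb hab
  rw [mem_ofPred_eq]
  filter_upwards [Lp.coeFn_add (a • f) (b • g), Lp.coeFn_smul a f, Lp.coeFn_smul b g, hf, hg]
    with x hadd hfx hgx hf hg
  rw [hadd, Pi.add_apply, hfx, hgx]
  exact hC hf hg ha hb hab

theorem MeasureTheory.isBounded_setOf_ae_mem_Lp [IsFiniteMeasure μ] [Fact (1 ≤ p)] {C : Set E}
    (hC : Bornology.IsBounded C) :
    Bornology.IsBounded {f : Lp E p μ | ∀ᵐ x ∂μ, f x ∈ C} := by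
  obtain ⟨R, hR⟩ := hC.exists_norm_le
  refine isBounded_iff_forall_norm_le.2 ⟨_, fun f hf => Lp.norm_le_of_ae_bound (le_max_right R 0)
    (Eventually.mono hf fun x hx => (hR _ hx).trans (le_max_left R 0))⟩

theorem MeasureTheory.integral_norm_le_mul_norm_Lp [IsFiniteMeasure μ] [Fact (1 ≤ p)]
    (f : Lp E p μ) : ∫ x, ‖f x‖ ∂μ ≤ (μ univ ^ (1 - p.toReal⁻¹)).toReal * ‖f‖ := by
  have hf := Lp.aestronglyMeasurable f
  have h := eLpNorm_le_eLpNorm_mul_rpow_measure_univ (Fact.out : 1 ≤ p) hf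
  simp only [ENNReal.toReal_one, div_one, one_div] at h
  have hexp : 0 ≤ 1 - p.toReal⁻¹ := by
    rw [sub_nonneg, ← ENNReal.toReal_inv]
    exact ENNReal.toReal_le_of_le_ofReal zero_le_one
      (by simpa using ENNReal.inv_le_one.2 (Fact.out : 1 ≤ p))
  rw [integral_norm_eq_lintegral_enorm hf, ← eLpNorm_one_eq_lintegral_enorm, Lp.norm_def,
    mul_comm, ← ENNReal.toReal_mul]
  exact ENNReal.toReal_mono (ENNReal.mul_ne_top (Lp.eLpNorm_ne_top f)
    (ENNReal.rpow_ne_top_of_nonneg hexp (measure_ne_top μ _))) h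

end LpSpace

namespace IsUnitaryGroup

variable {E : Type*} [NormedAddCommGroup E] [InnerProductSpace ℂ E] {U : ℝ → E →L[ℂ] E}

theorem continuous_uncurry (hU : IsUnitaryGroup U) : Continuous fun p : ℝ × E => U p.1 p.2 := by
  obtain ⟨-, -, hnorm, hcont⟩ := hU
  rw [continuous_iff_continuousAt]
  rintro ⟨t₀, x₀⟩
  have hle : ∀ p : ℝ × E, ‖U p.1 p.2 - U t₀ x₀‖ ≤ ‖p.2 - x₀‖ + ‖U p.1 x₀ - U t₀ x₀‖ := by
    rintro ⟨t, x⟩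
    calc ‖U t x - U t₀ x₀‖ = ‖U t (x - x₀) + (U t x₀ - U t₀ x₀)‖ := by
          rw [map_sub, sub_add_sub_cancel]
      _ ≤ ‖x - x₀‖ + ‖U t x₀ - U t₀ x₀‖ := by rw [← hnorm t (x - x₀)]; exact norm_add_le _ _
  have hc : Continuous fun p : ℝ × E => ‖p.2 - x₀‖ + ‖U p.1 x₀ - U t₀ x₀‖ := by fun_prop
  have hlim := hc.tendsto (t₀, x₀)
  rw [sub_self, sub_self, norm_zero, add_zero] at hlim
  rw [ContinuousAt, tendsto_iff_norm_sub_tendsto_zero]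
  exact squeeze_zero (fun _ => norm_nonneg _) hle hlim

theorem norm_apply_le (hU : IsUnitaryGroup U) (B : E →L[ℂ] E) (t : ℝ) (x : E) :
    ‖U t (B x)‖ ≤ ‖B‖ * ‖x‖ := by
  rw [hU.2.2.1]
  exact B.le_opNorm x

theorem integrable_duhamel (hU : IsUnitaryGroup U) (B : E →L[ℂ] E) (T : ℝ) {μ : Measure ℝ}
    {f : ℝ → E} (hf : Integrable f μ) : Integrable (fun s => U (T - s) (B (f s))) μ :=
  (hf.norm.const_mul ‖B‖).mono'
    (hU.continuous_uncurry.comp_aestronglyMeasurable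
      ((continuous_const.sub continuous_id).aestronglyMeasurable.prodMk
        (B.continuous.comp_aestronglyMeasurable hf.1)))
    (Eventually.of_forall fun s => hU.norm_apply_le B (T - s) (f s))

def duhamel (hU : IsUnitaryGroup U) (B : E →L[ℂ] E) (T : ℝ) (μ : Measure ℝ) [IsFiniteMeasure μ]
    (p : ℝ≥0∞) [Fact (1 ≤ p)] : Lp E p μ →L[ℂ] E :=
  LinearMap.mkContinuous
    { toFun := fun u => ∫ s, U (T - s) (B (u s)) ∂μ
      map_add' := fun u v => by
        rw [← integral_add (hU.integrable_duhamel B T ((Lp.memLp u).integrable Fact.out))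
          (hU.integrable_duhamel B T ((Lp.memLp v).integrable Fact.out))]
        refine integral_congr_ae ?_
        filter_upwards [Lp.coeFn_add u v] with s hs
        rw [hs, Pi.add_apply, map_add, map_add]
      map_smul' := fun a u => by
        rw [RingHom.id_apply, ← integral_smul]
        refine integral_congr_ae ?_
        filter_upwards [Lp.coeFn_smul a u] with s hs
        rw [hs, Pi.smul_apply, map_smul, map_smul] }
    (‖B‖ * (μ univ ^ (1 - p.toReal⁻¹)).toReal) fun u => by
      calc ‖∫ s, U (T - s) (B (u s)) ∂μ‖ ≤ ∫ s, ‖B‖ * ‖u s‖ ∂μ :=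
            norm_integral_le_of_norm_le
              (((Lp.memLp u).integrable Fact.out).norm.const_mul ‖B‖)
              (Eventually.of_forall fun s => hU.norm_apply_le B (T - s) (u s))
        _ = ‖B‖ * ∫ s, ‖u s‖ ∂μ := integral_const_mul _ _
        _ ≤ ‖B‖ * (μ univ ^ (1 - p.toReal⁻¹)).toReal * ‖u‖ := by
            rw [mul_assoc]
            exact mul_le_mul_of_nonneg_left (integral_norm_le_mul_norm_Lp u) (norm_nonneg B)

theorem duhamel_apply (hU : IsUnitaryGroup U) (B : E →L[ℂ] E) (T : ℝ) (μ : Measure ℝ)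
    [IsFiniteMeasure μ] (p : ℝ≥0∞) [Fact (1 ≤ p)] (u : Lp E p μ) :
    hU.duhamel B T μ p u = ∫ s, U (T - s) (B (u s)) ∂μ :=
  rfl

end IsUnitaryGroup

section SupNorm

variable {E : Type*} [NormedAddCommGroup E]

theorem supNorm_nonneg (u : ℝ → E) (a b : ℝ) : 0 ≤ supNorm u a b :=
  Real.sInf_nonneg fun _ hc => hc.1

theorem supNorm_le {u : ℝ → E} {a b c : ℝ} (hc : 0 ≤ c)
    (h : ∀ᵐ t, t ∈ Ioo a b → ‖u t‖ ≤ c) : supNorm u a b ≤ c :=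
  csInf_le ⟨0, fun _ hx => hx.1⟩ ⟨hc, h⟩

theorem MemLinfty.ae_norm_le_of_supNorm_lt {u : ℝ → E} {a b c : ℝ} (hu : MemLinfty u a b)
    (h : supNorm u a b < c) : ∀ᵐ t, t ∈ Ioo a b → ‖u t‖ ≤ c := by
  obtain ⟨c₀, hc₀⟩ := hu.2
  have hne : {c | 0 ≤ c ∧ ∀ᵐ t, t ∈ Ioo a b → ‖u t‖ ≤ c}.Nonempty :=
    ⟨max c₀ 0, le_max_right _ _, hc₀.mono fun t ht hmem => (ht hmem).trans (le_max_left _ _)⟩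
  obtain ⟨c', ⟨-, hc'⟩, hlt⟩ := exists_lt_of_csInf_lt hne h
  exact hc'.mono fun t ht hmem => (ht hmem).trans hlt.le

end SupNorm

section MinimalNorm

open Metric

variable {E : Type*} [NormedAddCommGroup E] [InnerProductSpace ℂ E]
  {U : ℝ → E →L[ℂ] E} {B : E →L[ℂ] E} {y₀ : E} {T : ℝ}

theorem EC.nonempty_VTset (hEC : EC U B) (hT : 0 < T) (y₀ : E) :
    (VTset U B y₀ T).Nonempty := by
  obtain ⟨C, -, hC⟩ := hEC T hT
  obtain ⟨u, hmeas, hbound, hsteer⟩ := hC y₀ 0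
  exact ⟨u, ⟨hmeas, _, hbound⟩, hsteer⟩

theorem Mmin_nonneg : 0 ≤ Mmin U B y₀ T :=
  Real.sInf_nonneg (by rintro _ ⟨v, -, rfl⟩; exact supNorm_nonneg v 0 T)

theorem Mmin_le_supNorm {v : ℝ → E} (hv : v ∈ VTset U B y₀ T) : Mmin U B y₀ T ≤ supNorm v 0 T :=
  csInf_le ⟨0, by rintro _ ⟨w, -, rfl⟩; exact supNorm_nonneg w 0 T⟩ ⟨v, hv, rfl⟩

theorem exists_mem_VTset_supNorm_lt (hne : (VTset U B y₀ T).Nonempty) {c : ℝ}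
    (hc : Mmin U B y₀ T < c) : ∃ v ∈ VTset U B y₀ T, supNorm v 0 T < c := by
  obtain ⟨_, ⟨v, hv, rfl⟩, hlt⟩ := exists_lt_of_csInf_lt (hne.image _) hc
  exact ⟨v, hv, hlt⟩

namespace IsUnitaryGroup

variable (hU : IsUnitaryGroup U) (B) (p : ℝ≥0∞) [Fact (1 ≤ p)]

theorem stateT_eq_add_duhamel {v : ℝ → E} {u : Lp E p (volume.restrict (Ioo 0 T))}
    (h : v =ᵐ[volume.restrict (Ioo 0 T)] u) :
    stateT U B T 0 v y₀ = U T y₀ + hU.duhamel B T _ p u := by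
  rw [duhamel_apply]
  exact congrArg (U T y₀ + ·)
    (integral_congr_ae (h.mono fun s hs => congrArg (fun x => U (T - s) (B x)) hs))

/-- The constraint `duhamel u = -U T y₀` says `y(T; u, y₀) = 0`. -/
def boundedNullControls (y₀ : E) (T c : ℝ) : Set (Lp E p (volume.restrict (Ioo 0 T))) :=
  {u | ∀ᵐ s ∂volume.restrict (Ioo 0 T), u s ∈ closedBall 0 c} ∩
    hU.duhamel B T _ p ⁻¹' {-U T y₀}

theorem boundedNullControls_mono {c c' : ℝ} (h : c ≤ c') :
    hU.boundedNullControls B p y₀ T c ⊆ hU.boundedNullControls B p y₀ T c' :=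
  inter_subset_inter_left _ <| ofPred_subset_ofPred.2 fun _ hu =>
    hu.mono fun _ hs => closedBall_subset_closedBall h hs

theorem isClosed_boundedNullControls (c : ℝ) : IsClosed (hU.boundedNullControls B p y₀ T c) :=
  (isClosed_setOf_ae_mem_Lp isClosed_closedBall).inter
    (isClosed_singleton.preimage (ContinuousLinearMap.continuous _))

theorem convex_boundedNullControls (c : ℝ) : Convex ℝ (hU.boundedNullControls B p y₀ T c) :=
  (convex_setOf_ae_mem_Lp (convex_closedBall 0 c)).inter
    ((convex_singleton _).linear_preimage ((hU.duhamel B T _ p).toLinearMap.restrictScalars ℝ))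

theorem isBounded_boundedNullControls (c : ℝ) :
    Bornology.IsBounded (hU.boundedNullControls B p y₀ T c) :=
  (isBounded_setOf_ae_mem_Lp isBounded_closedBall).subset inter_subset_left

theorem boundedNullControls_nonempty (hne : (VTset U B y₀ T).Nonempty) {c : ℝ}
    (hc : Mmin U B y₀ T < c) : (hU.boundedNullControls B p y₀ T c).Nonempty := by
  obtain ⟨v, hv, hlt⟩ := exists_mem_VTset_supNorm_lt hne hc
  have hbound : ∀ᵐ s ∂volume.restrict (Ioo 0 T), ‖v s‖ ≤ c :=
    (ae_restrict_iff' measurableSet_Ioo).2 (hv.1.ae_norm_le_of_supNorm_lt hlt)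
  have hmem : MemLp v p (volume.restrict (Ioo 0 T)) := .of_bound hv.1.1.restrict c hbound
  refine ⟨hmem.toLp v, ?_, ?_⟩
  · filter_upwards [hmem.coeFn_toLp, hbound] with s hs hb
    rwa [hs, mem_closedBall_zero_iff]
  · rw [mem_preimage, mem_singleton_iff, eq_comm, neg_eq_iff_add_eq_zero,
      ← hU.stateT_eq_add_duhamel B p hmem.coeFn_toLp.symm]
    exact hv.2

theorem mem_boundedNullControls_of_tendsto {u : Lp E p (volume.restrict (Ioo 0 T))}
    {c : ℕ → ℝ} {c₀ : ℝ} (hc : Tendsto c atTop (𝓝 c₀))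
    (hu : ∀ n, u ∈ hU.boundedNullControls B p y₀ T (c n)) :
    u ∈ hU.boundedNullControls B p y₀ T c₀ := by
  refine ⟨?_, (hu 0).2⟩
  filter_upwards [ae_all_iff.2 fun n => (hu n).1] with s hs
  simp only [mem_closedBall_zero_iff] at hs ⊢
  exact ge_of_tendsto' hc hs

theorem exists_mem_VTset_supNorm_le {u : Lp E p (volume.restrict (Ioo 0 T))} {c : ℝ}
    (hu : u ∈ hU.boundedNullControls B p y₀ T c) (hc : 0 ≤ c) :
    ∃ v ∈ VTset U B y₀ T, supNorm v 0 T ≤ c := by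
  have hmeas := Lp.aestronglyMeasurable u
  have hbound : ∀ᵐ t, t ∈ Ioo 0 T → ‖hmeas.mk u t‖ ≤ c := by
    rw [← ae_restrict_iff' measurableSet_Ioo]
    filter_upwards [hmeas.ae_eq_mk, hu.1] with t ht hb
    rwa [← ht, ← mem_closedBall_zero_iff]
  have hsteer : hU.duhamel B T _ p u = -U T y₀ := hu.2
  refine ⟨hmeas.mk u, ⟨⟨hmeas.stronglyMeasurable_mk.aestronglyMeasurable, c, hbound⟩, ?_⟩,
    supNorm_le hc hbound⟩
  rw [hU.stateT_eq_add_duhamel B p hmeas.ae_eq_mk.symm, hsteer, add_neg_cancel]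

end IsUnitaryGroup

end MinimalNorm

theorem nocp_has_optimal_control_general
    (U : ℝ → H →L[ℂ] H) (B : H →L[ℂ] H) (hU : IsUnitaryGroup U)
    (hEC : EC U B)
    (y₀ : H) (T : ℝ) (hT : 0 < T) :
    ∃ v : ℝ → H, v ∈ VTset U B y₀ T ∧ supNorm v 0 T = Mmin U B y₀ T := by
  let : InnerProductSpace ℝ (Lp H 2 (volume.restrict (Ioo 0 T))) := .complexToReal
  set M := Mmin U B y₀ T
  have hc : Tendsto (fun n : ℕ => M + 1 / ((n : ℝ) + 1)) atTop (𝓝 M) := by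
    simpa using (tendsto_one_div_add_atTop_nhds_zero_nat (𝕜 := ℝ)).const_add M
  have hanti : Antitone fun n : ℕ => M + 1 / ((n : ℝ) + 1) := fun _ _ h =>
    add_le_add_right (Nat.one_div_le_one_div h) M
  obtain ⟨u, hu⟩ := nonempty_iInter_of_antitone_of_convex
    (S := fun n => hU.boundedNullControls B 2 y₀ T (M + 1 / ((n : ℝ) + 1)))
    (fun _ _ h => hU.boundedNullControls_mono B 2 (hanti h))
    (fun _ => hU.boundedNullControls_nonempty B 2 (hEC.nonempty_VTset hT y₀)
      (lt_add_of_pos_right M Nat.one_div_pos_of_nat))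
    (fun _ => hU.isClosed_boundedNullControls B 2 _)
    (fun _ => hU.convex_boundedNullControls B 2 _)
    (hU.isBounded_boundedNullControls B 2 _)
  obtain ⟨v, hv, hvM⟩ := hU.exists_mem_VTset_supNorm_le B 2
    (hU.mem_boundedNullControls_of_tendsto B 2 hc (mem_iInter.1 hu)) Mmin_nonneg
  exact ⟨v, hv, le_antisymm hvM (Mmin_le_supNorm hv)⟩

theorem nocp_has_optimal_control
    (U : ℝ → H →L[ℂ] H) (B : H →L[ℂ] H) (hU : IsUnitaryGroup U) (hB : IsOrthProj B)
    (hEC : EC U B) (hECrev : EC (fun t => U (-t)) B)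
    (y₀ : H) (T : ℝ) (hT : 0 < T) :
    ∃ v : ℝ → H, v ∈ VTset U B y₀ T ∧ supNorm v 0 T = Mmin U B y₀ T :=
  nocp_has_optimal_control_general U B hU hEC y₀ T hT
end
end

section
/- Assume y₀ ≠ 0 and hypotheses (EC), (BB), (ET). Then the minimal time map M ↦ T_M from (0,∞) to (0,∞) is strictly monotonically decreasing and continuous, and satisfies lim_{M→0⁺} T_M = ∞ and lim_{M→∞} T_M = 0. -/
open MeasureTheory Set Filter Topology

noncomputable section

variable {H : Type*} [NormedAddCommGroup H] [InnerProductSpace ℂ H] [CompleteSpace H]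
  [SecondCountableTopology H]

/-!
A control of norm at most `M` moves the state by at most `M` per unit time, so
`‖y₀‖ / M ≤ T_M`; this gives `T_M > 0` and `T_M → ∞` as `M → 0⁺`. Conversely (EC) steers `y₀`
to `0` in any time `τ` with norm `C(τ) ‖y₀‖`, so `T_M ≤ τ` for large `M`. An optimal control for
`M₁` is admissible for `M₂ > M₁`, so `T_{M₂} ≤ T_{M₁}`; equality would make it optimal for `M₂`,
and (BB) would force its norm to be `M₂ > M₁` a.e. on `(0, T_{M₂})`. For continuity, rescale an
optimal control for `M'` by `M / M'`: in time `T_{M'}` it steers `y₀` to a point of norm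
`|1 - M / M'| ‖y₀‖`, from which (EC) reaches `0` in any extra time `ε` with norm at most `M` as
soon as `M` is close to `M'`. Hence `T_M ≤ T_{M'} + ε` for `M` near `M'`, and symmetrically.
-/

section ControlSystem

variable {E : Type*} [NormedAddCommGroup E] [InnerProductSpace ℂ E]
  {U : ℝ → E →L[ℂ] E} {B : E →L[ℂ] E}

lemma IsOrthProj.norm_apply_le (hB : IsOrthProj B) (x : E) : ‖B x‖ ≤ ‖x‖ := by
  have hBB : B (B x) = B x := congrArg (fun T : E →L[ℂ] E => T x) hB.2.1
  have hsq : ‖B x‖ ^ 2 ≤ ‖x‖ * ‖B x‖ :=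
    calc ‖B x‖ ^ 2 = ‖(inner ℂ (B x) (B x) : ℂ)‖ := by simp [inner_self_eq_norm_sq_to_K]
    _ = ‖(inner ℂ x (B x) : ℂ)‖ := by rw [hB.2.2, hBB]
    _ ≤ ‖x‖ * ‖B x‖ := norm_inner_le_norm _ _
  nlinarith [norm_nonneg (B x), norm_nonneg x]

lemma IsUnitaryGroup.norm_apply (hU : IsUnitaryGroup U) (t : ℝ) (x : E) : ‖U t x‖ = ‖x‖ :=
  hU.2.2.1 t x

lemma IsUnitaryGroup.add_apply (hU : IsUnitaryGroup U) (s t : ℝ) (x : E) :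
    U (s + t) x = U s (U t x) := by
  rw [hU.2.1]; rfl

lemma IsUnitaryGroup.continuous_uncurry_s1 (hU : IsUnitaryGroup U) :
    Continuous fun p : ℝ × E => U p.1 p.2 := by
  refine continuous_iff_continuousAt.2 fun ⟨t₀, x₀⟩ => ?_
  -- `U t x = U t (x - x₀) + U t x₀`, where the first term has norm `‖x - x₀‖` uniformly in `t`
  have hsmall : Tendsto (fun p : ℝ × E => U p.1 (p.2 - x₀)) (𝓝 (t₀, x₀)) (𝓝 0) := by
    refine squeeze_zero_norm (fun p => (hU.norm_apply _ _).le) ?_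
    simpa using ((continuous_snd.sub continuous_const).norm.tendsto (t₀, x₀) :
      Tendsto (fun p : ℝ × E => ‖p.2 - x₀‖) _ _)
  have hx₀ : Tendsto (fun p : ℝ × E => U p.1 x₀) (𝓝 (t₀, x₀)) (𝓝 (U t₀ x₀)) :=
    ((hU.2.2.2 x₀).comp continuous_fst).continuousAt
  simpa [ContinuousAt] using hsmall.add hx₀

lemma IsUnitaryGroup.aestronglyMeasurable_duhamel (hU : IsUnitaryGroup U) (B : E →L[ℂ] E)
    {u : ℝ → E} (hu : AEStronglyMeasurable u volume) (T : ℝ) :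
    AEStronglyMeasurable (fun r => U (T - r) (B (u r))) volume :=
  (hU.continuous_uncurry_s1.comp ((continuous_const.sub continuous_fst).prodMk
    (B.continuous.comp continuous_snd))).comp_aestronglyMeasurable
    (aestronglyMeasurable_id.prodMk hu)

lemma norm_le_mul_of_stateT_eq_zero (hU : IsUnitaryGroup U) (hB : IsOrthProj B)
    {s M : ℝ} {u : ℝ → E} {y : E} (hs : 0 ≤ s) (hu : ∀ᵐ t, t ∈ Ioi (0 : ℝ) → ‖u t‖ ≤ M)
    (hy : stateT U B s 0 u y = 0) : ‖y‖ ≤ s * M := by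
  have hbd : ∀ᵐ t ∂volume.restrict (Ioo 0 s), ‖U (s - t) (B (u t))‖ ≤ M := by
    filter_upwards [ae_restrict_of_ae hu, ae_restrict_mem measurableSet_Ioo] with t ht hmem
    rw [hU.norm_apply]
    exact (hB.norm_apply_le _).trans (ht hmem.1)
  calc ‖y‖ = ‖U s y‖ := (hU.norm_apply s y).symm
  _ = ‖∫ t in Ioo 0 s, U (s - t) (B (u t))‖ := by rw [eq_neg_of_add_eq_zero_left hy, norm_neg]
  _ ≤ M * volume.real (Ioo 0 s) := norm_setIntegral_le_of_norm_le_const_ae measure_Ioo_lt_top hbd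
  _ = s * M := by simp [hs, mul_comm]

/-- Controls are normalised to be bounded everywhere and to vanish off `(0, s)`, so that they
can be rescaled, concatenated and compared with integrals over all of `ℝ`. -/
structure Steers (U : ℝ → E →L[ℂ] E) (B : E →L[ℂ] E) (s M : ℝ) (u : ℝ → E) (y z : E) :
    Prop where
  aestronglyMeasurable : AEStronglyMeasurable u volume
  norm_le : ∀ t, ‖u t‖ ≤ M
  eq_zero_of_notMem : ∀ t ∉ Ioo 0 s, u t = 0
  stateT_eq : stateT U B s 0 u y = z

lemma stateT_eq_integral {T : ℝ} {v : ℝ → E} (hv : ∀ t ∉ Ioo 0 T, v t = 0) (y : E) :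
    stateT U B T 0 v y = U T y + ∫ r, U (T - r) (B (v r)) := by
  rw [stateT, setIntegral_eq_integral_of_forall_compl_eq_zero fun r hr => by simp [hv r hr]]

lemma exists_steers_of_ae_norm_le {s c : ℝ} {u : ℝ → E} {y z : E}
    (hu : AEStronglyMeasurable u volume) (hbd : ∀ᵐ t, t ∈ Ioo 0 s → ‖u t‖ ≤ c) (hc : 0 ≤ c)
    (hz : stateT U B s 0 u y = z) : ∃ v, Steers U B s c v y z := by
  obtain ⟨g, hg, hug⟩ := hu
  set A : Set ℝ := Ioo 0 s ∩ {t | ‖g t‖ ≤ c}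
  have hA : MeasurableSet A := measurableSet_Ioo.inter (hg.norm.measurable measurableSet_Iic)
  refine ⟨A.indicator g, ⟨(hg.indicator hA).aestronglyMeasurable, fun t => ?_,
    fun t ht => indicator_of_notMem (fun hA' => ht hA'.1) g, ?_⟩⟩
  · by_cases h : t ∈ A
    · rw [indicator_of_mem h]; exact h.2
    · rw [indicator_of_notMem h, norm_zero]; exact hc
  · rw [← hz, stateT, stateT]
    congr 1
    refine setIntegral_congr_ae measurableSet_Ioo ?_
    filter_upwards [hug, hbd] with t hgt hbdt ht
    have hmem : t ∈ A := ⟨ht, show ‖g t‖ ≤ c by rw [← hgt]; exact hbdt ht⟩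
    rw [indicator_of_mem hmem, ← hgt]

namespace Steers

variable {s ε M : ℝ} {u w : ℝ → E} {y z z' : E}

lemma mono (h : Steers U B s M u y z) {M' : ℝ} (hM : M ≤ M') : Steers U B s M' u y z :=
  ⟨h.aestronglyMeasurable, fun t => (h.norm_le t).trans hM, h.eq_zero_of_notMem, h.stateT_eq⟩

lemma integrable_duhamel (hU : IsUnitaryGroup U) (hB : IsOrthProj B) (h : Steers U B s M u y z)
    (T : ℝ) : Integrable (fun r => U (T - r) (B (u r))) volume := by
  have hon : IntegrableOn (fun r => U (T - r) (B (u r))) (Ioo 0 s) :=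
    Integrable.mono' (integrableOn_const measure_Ioo_lt_top.ne)
      (hU.aestronglyMeasurable_duhamel B h.aestronglyMeasurable T).restrict
      (ae_of_all _ fun r => (hU.norm_apply _ _).trans_le
        ((hB.norm_apply_le _).trans (h.norm_le r)))
  refine (integrableOn_iff_integrable_of_support_subset fun r hr => ?_).1 hon
  by_contra hr'
  exact hr (by simp [h.eq_zero_of_notMem r hr'])

lemma integral_duhamel (h : Steers U B s M u y z) :
    ∫ r, U (s - r) (B (u r)) = z - U s y := by
  rw [eq_sub_iff_add_eq', ← stateT_eq_integral h.eq_zero_of_notMem, h.stateT_eq]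

lemma smul (h : Steers U B s M u y 0) {c : ℝ} (hc : 0 ≤ c) :
    Steers U B s (c * M) (fun t => c • u t) y ((1 - c) • U s y) := by
  refine ⟨h.aestronglyMeasurable.const_smul c, fun t => ?_, fun t ht => ?_, ?_⟩
  · rw [norm_smul, Real.norm_of_nonneg hc]
    exact mul_le_mul_of_nonneg_left (h.norm_le t) hc
  · simp [h.eq_zero_of_notMem t ht]
  · have hsmul : (fun r => U (s - r) (B (c • u r))) = fun r => c • U (s - r) (B (u r)) := by
      funext r
      rw [B.map_smul_of_tower, (U (s - r)).map_smul_of_tower]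
    rw [stateT_eq_integral (fun t ht => by simp [h.eq_zero_of_notMem t ht]), hsmul,
      integral_smul, h.integral_duhamel, zero_sub, smul_neg, ← sub_eq_add_neg, sub_smul,
      one_smul]

lemma append [CompleteSpace E] (hU : IsUnitaryGroup U) (hB : IsOrthProj B)
    (hs : 0 ≤ s) (hε : 0 ≤ ε) (hu : Steers U B s M u y z) (hw : Steers U B ε M w z z') :
    Steers U B (s + ε) M (fun t => u t + w (t - s)) y z' := by
  have hu_off : ∀ t, s ≤ t → u t = 0 := fun t ht =>
    hu.eq_zero_of_notMem t fun h => ht.not_gt h.2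
  have hw_off : ∀ t, t ≤ s → w (t - s) = 0 := fun t ht =>
    hw.eq_zero_of_notMem _ fun h => (sub_nonpos.2 ht).not_gt h.1
  have hoff : ∀ t ∉ Ioo 0 (s + ε), u t + w (t - s) = 0 := by
    intro t ht
    rw [hu.eq_zero_of_notMem t fun h => ht ⟨h.1, by linarith [h.2]⟩, zero_add]
    exact hw.eq_zero_of_notMem _ fun h => ht ⟨by linarith [h.1], by linarith [h.2]⟩
  refine ⟨hu.aestronglyMeasurable.add (hw.aestronglyMeasurable.comp_measurePreserving
    (measurePreserving_sub_right volume s)), fun t => ?_, hoff, ?_⟩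
  · rcases le_or_gt s t with hst | hts
    · simpa [hu_off t hst] using hw.norm_le (t - s)
    · simpa [hw_off t hts.le] using hu.norm_le t
  have hfirst : ∫ r, U (s + ε - r) (B (u r)) = U ε (z - U s y) := by
    simp_rw [show ∀ r, s + ε - r = ε + (s - r) from fun r => by ring, hU.add_apply]
    rw [ContinuousLinearMap.integral_comp_comm _ (hu.integrable_duhamel hU hB s),
      hu.integral_duhamel]
  have hshift : ∀ r, ε - (r - s) = s + ε - r := fun r => by ring
  have hsecond : ∫ r, U (s + ε - r) (B (w (r - s))) = z' - U ε z := by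
    rw [← hw.integral_duhamel, ← integral_sub_right_eq_self (fun r => U (ε - r) (B (w r))) s]
    simp_rw [hshift]
  have hint_w : Integrable (fun r => U (s + ε - r) (B (w (r - s)))) := by
    simpa only [hshift] using (hw.integrable_duhamel hU hB ε).comp_sub_right s
  rw [stateT_eq_integral hoff]
  simp_rw [map_add]
  rw [integral_add (hu.integrable_duhamel hU hB _) hint_w, hfirst, hsecond, add_comm s ε,
    hU.add_apply, map_sub]
  abel

end Steers

variable {y : E}

lemma Steers.mem_UMset {s M : ℝ} {u : ℝ → E} (h : Steers U B s M u y 0) (hs : 0 < s) :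
    u ∈ UMset U B y M :=
  ⟨⟨h.aestronglyMeasurable, M, ae_of_all _ fun t _ => h.norm_le t⟩,
    ae_of_all _ fun t _ => h.norm_le t, s, hs, h.stateT_eq⟩

lemma Tmin_le_of_steers {s M : ℝ} {u : ℝ → E} (hs : 0 < s) (h : Steers U B s M u y 0) :
    Tmin U B y M ≤ s :=
  csInf_le ⟨0, fun _ hx => hx.1.le⟩ ⟨hs, u, h.mem_UMset hs, h.stateT_eq⟩

lemma EC.exists_steers (hEC : EC U B) {τ : ℝ} (hτ : 0 < τ) :
    ∃ C, ∀ y z : E, ∃ u, Steers U B τ (C * ‖z - U τ y‖) u y z := by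
  obtain ⟨C, hC, hcontrol⟩ := hEC τ hτ
  refine ⟨C, fun y z => ?_⟩
  obtain ⟨u, hmeas, hbd, hz⟩ := hcontrol y z
  exact exists_steers_of_ae_norm_le hmeas hbd (by positivity) hz

lemma ET.exists_steers (hET : ET U B) (hy : y ≠ 0) {M : ℝ} (hM : 0 < M) :
    ∃ u, Steers U B (Tmin U B y M) M u y 0 := by
  obtain ⟨u, ⟨⟨hmeas, -⟩, hbd, -⟩, hz⟩ := hET y hy M hM
  refine exists_steers_of_ae_norm_le hmeas ?_ hM.le hz
  filter_upwards [hbd] with t ht hmem using ht hmem.1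

lemma div_le_Tmin (hU : IsUnitaryGroup U) (hB : IsOrthProj B) (hET : ET U B) (hy : y ≠ 0)
    {M : ℝ} (hM : 0 < M) : ‖y‖ / M ≤ Tmin U B y M := by
  obtain ⟨u, hu, -⟩ := hET y hy M hM
  obtain ⟨s, hs, hsy⟩ := hu.2.2
  refine le_csInf ⟨s, hs, u, hu, hsy⟩ fun s ⟨hs, u, ⟨_, hbd, _⟩, hsy⟩ => ?_
  rw [div_le_iff₀ hM]
  exact norm_le_mul_of_stateT_eq_zero hU hB hs.le hbd hsy

lemma Tmin_pos (hU : IsUnitaryGroup U) (hB : IsOrthProj B) (hET : ET U B) (hy : y ≠ 0)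
    {M : ℝ} (hM : 0 < M) : 0 < Tmin U B y M :=
  (div_pos (norm_pos_iff.2 hy) hM).trans_le (div_le_Tmin hU hB hET hy hM)

theorem Tmin_strictAntiOn (hU : IsUnitaryGroup U) (hB : IsOrthProj B) (hBB : BB U B)
    (hET : ET U B) (hy : y ≠ 0) : StrictAntiOn (Tmin U B y) (Ioi 0) := by
  intro M₁ hM₁ M₂ hM₂ hlt
  have hT₁ := Tmin_pos hU hB hET hy hM₁
  obtain ⟨u, hu⟩ := hET.exists_steers hy hM₁
  have hu₂ := hu.mono hlt.le
  refine (Tmin_le_of_steers hT₁ hu₂).lt_of_ne fun heq => ?_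
  have hbang := hBB y hy M₂ hM₂ u (hu₂.mem_UMset hT₁) (by rw [heq]; exact hu.stateT_eq)
  have hnull : volume (Ioo 0 (Tmin U B y M₂)) = 0 := by
    refine measure_eq_zero_iff_ae_notMem.2 ?_
    filter_upwards [hbang] with t ht hmem
    linarith [ht hmem, hu.norm_le t]
  rw [Real.volume_Ioo, ENNReal.ofReal_eq_zero] at hnull
  linarith [Tmin_pos hU hB hET hy hM₂]

lemma exists_Tmin_le_add [CompleteSpace E] (hU : IsUnitaryGroup U) (hB : IsOrthProj B)
    (hEC : EC U B) (hET : ET U B) (hy : y ≠ 0) {ε : ℝ} (hε : 0 < ε) :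
    ∃ C, ∀ M M', 0 < M → 0 < M' → C * |M - M'| * ‖y‖ ≤ M * M' →
      Tmin U B y M ≤ Tmin U B y M' + ε := by
  obtain ⟨C, hC⟩ := hEC.exists_steers hε
  refine ⟨C, fun M M' hM hM' hclose => ?_⟩
  obtain ⟨u, hu⟩ := hET.exists_steers hy hM'
  have hT' := Tmin_pos hU hB hET hy hM'
  have hscaled := hu.smul (div_nonneg hM.le hM'.le)
  rw [div_mul_cancel₀ M hM'.ne'] at hscaled
  obtain ⟨w, hw⟩ := hC ((1 - M / M') • U (Tmin U B y M') y) 0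
  have hcost : C * ‖0 - U ε ((1 - M / M') • U (Tmin U B y M') y)‖ ≤ M := by
    rw [zero_sub, norm_neg, hU.norm_apply, norm_smul, hU.norm_apply, Real.norm_eq_abs,
      one_sub_div hM'.ne', abs_div, abs_of_pos hM', abs_sub_comm,
      show C * (|M - M'| / M' * ‖y‖) = C * |M - M'| * ‖y‖ / M' by ring, div_le_iff₀ hM']
    exact hclose
  exact Tmin_le_of_steers (by positivity) (hscaled.append hU hB hT'.le hε.le (hw.mono hcost))

theorem Tmin_continuousOn [CompleteSpace E] (hU : IsUnitaryGroup U) (hB : IsOrthProj B)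
    (hEC : EC U B) (hET : ET U B) (hy : y ≠ 0) : ContinuousOn (Tmin U B y) (Ioi 0) := by
  intro M₀ hM₀
  refine ContinuousAt.continuousWithinAt (Metric.tendsto_nhds.2 fun ε hε => ?_)
  obtain ⟨C, hC⟩ := exists_Tmin_le_add hU hB hEC hET hy (half_pos hε)
  have hclose : ∀ᶠ M in 𝓝 M₀, C * |M - M₀| * ‖y‖ < M * M₀ := by
    refine Tendsto.eventually_lt (y := 0) ?_
      ((continuous_id.mul continuous_const).tendsto M₀) (mul_pos hM₀ hM₀)
    simpa using (by fun_prop : Continuous fun M : ℝ => C * |M - M₀| * ‖y‖).tendsto M₀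
  filter_upwards [hclose, lt_mem_nhds hM₀] with M hM hMpos
  have h₁ := hC M M₀ hMpos hM₀ hM.le
  have h₂ := hC M₀ M hM₀ hMpos (by rw [abs_sub_comm, mul_comm M₀]; exact hM.le)
  rw [Real.dist_eq, abs_sub_lt_iff]
  constructor <;> linarith

theorem tendsto_Tmin_nhdsGT_zero (hU : IsUnitaryGroup U) (hB : IsOrthProj B) (hET : ET U B)
    (hy : y ≠ 0) : Tendsto (Tmin U B y) (𝓝[>] 0) atTop := by
  refine tendsto_atTop_mono' _ (eventually_nhdsWithin_of_forall fun M hM => ?_)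
    (tendsto_inv_nhdsGT_zero.const_mul_atTop (norm_pos_iff.2 hy))
  rw [← div_eq_mul_inv]
  exact div_le_Tmin hU hB hET hy hM

theorem tendsto_Tmin_atTop (hU : IsUnitaryGroup U) (hB : IsOrthProj B) (hEC : EC U B)
    (hET : ET U B) (hy : y ≠ 0) : Tendsto (Tmin U B y) atTop (𝓝 0) := by
  refine tendsto_order.2 ⟨fun a ha => ?_, fun a ha => ?_⟩
  · filter_upwards [eventually_gt_atTop 0] with M hM using ha.trans (Tmin_pos hU hB hET hy hM)
  · obtain ⟨C, hC⟩ := hEC.exists_steers (half_pos ha)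
    obtain ⟨u, hu⟩ := hC y 0
    filter_upwards [eventually_ge_atTop (C * ‖y‖)] with M hM
    have hcost : C * ‖0 - U (a / 2) y‖ ≤ M := by rwa [zero_sub, norm_neg, hU.norm_apply]
    exact (Tmin_le_of_steers (half_pos ha) (hu.mono hcost)).trans_lt (half_lt_self ha)

end ControlSystem

theorem minimal_time_map_properties_general
    (U : ℝ → H →L[ℂ] H) (B : H →L[ℂ] H) (hU : IsUnitaryGroup U) (hB : IsOrthProj B)
    (hEC : EC U B)
    (hBB : BB U B)
    (hET : ET U B)
    (y₀ : H) (hy₀ : y₀ ≠ 0) :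
    StrictAntiOn (Tmin U B y₀) (Ioi (0 : ℝ)) ∧
    ContinuousOn (Tmin U B y₀) (Ioi (0 : ℝ)) ∧
    (∀ M : ℝ, 0 < M → 0 < Tmin U B y₀ M) ∧
    Tendsto (Tmin U B y₀) (𝓝[>] (0 : ℝ)) atTop ∧
    Tendsto (Tmin U B y₀) atTop (𝓝 (0 : ℝ)) :=
  ⟨Tmin_strictAntiOn hU hB hBB hET hy₀, Tmin_continuousOn hU hB hEC hET hy₀,
    fun _ hM => Tmin_pos hU hB hET hy₀ hM, tendsto_Tmin_nhdsGT_zero hU hB hET hy₀,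
    tendsto_Tmin_atTop hU hB hEC hET hy₀⟩

theorem minimal_time_map_properties
    (U : ℝ → H →L[ℂ] H) (B : H →L[ℂ] H) (hU : IsUnitaryGroup U) (hB : IsOrthProj B)
    (hEC : EC U B) (hECrev : EC (fun t => U (-t)) B)
    (hBB : BB U B) (hBBrev : BB (fun t => U (-t)) B)
    (hET : ET U B) (hETrev : ET (fun t => U (-t)) B)
    (y₀ : H) (hy₀ : y₀ ≠ 0) :
    StrictAntiOn (Tmin U B y₀) (Ioi (0 : ℝ)) ∧
    ContinuousOn (Tmin U B y₀) (Ioi (0 : ℝ)) ∧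
    (∀ M : ℝ, 0 < M → 0 < Tmin U B y₀ M) ∧
    Tendsto (Tmin U B y₀) (𝓝[>] (0 : ℝ)) atTop ∧
    Tendsto (Tmin U B y₀) atTop (𝓝 (0 : ℝ)) :=
  minimal_time_map_properties_general U B hU hB hEC hBB hET y₀ hy₀
end
end
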